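/- For the velocity field v of the unit-square vortex patch, there is a constant C > 0 such that for all x ∈ 3Q_0 and y ∉ 3Q_0, |v(x) - v(y)| ≤ C|x-y|/(1+|y|), and hence |v(x)-v(y)| ≤ C'|x-y|/((1+|x|)(1+|y|)) since |x| is bounded on 3Q_0. -/

import Mathlib

open MeasureTheory Real Filter

noncomputable section

abbrev E2 := EuclideanSpace ℝ (Fin 2)

/-- The Biot–Savart kernel `K(z) = z^⊥ / (2π |z|^2)`. -/
def K (z : E2) : E2 := (1 / (2 * Real.pi * ‖z‖ ^ 2)) • (WithLp.toLp 2 ![-(z 1), z 0] : E2)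

/-- The unit square `Q_0 = [0,1)^2`. -/
def Q0 : Set E2 := {y | y 0 ∈ Set.Ico (0 : ℝ) 1 ∧ y 1 ∈ Set.Ico (0 : ℝ) 1}

/-- The concentric triple `3Q_0` of the unit square (side 3, same center). -/
def threeQ0 : Set E2 := {y | y 0 ∈ Set.Icc (-1 : ℝ) 2 ∧ y 1 ∈ Set.Icc (-1 : ℝ) 2}

/-- The velocity field of the unit-square vortex patch. -/
def v (x : E2) : E2 := ∫ y in Q0, K (x - y)

/-- Embedding of the lattice `ℤ²` into the plane. -/
def latt (n : ℤ × ℤ) : E2 := (WithLp.toLp 2 ![(n.1 : ℝ), (n.2 : ℝ)] : E2)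

/-- `ln⁻ t = -min{0, ln t} = max{0, -ln t}`. -/
def lnNeg (t : ℝ) : ℝ := max 0 (-Real.log t)

end


/-!
The kernel factors as `K = (2π)⁻¹ • R ∘ ι` with `R` the rotation by `π/2` and `ι z = z / ‖z‖²`
the inversion in the unit circle. Hence `‖K z‖ = (2π‖z‖)⁻¹`, which is locally integrable in the
plane, so `v` is bounded; and `‖K a - K b‖ = ‖a - b‖ / (2π‖a‖‖b‖)`. For `y ∉ 3Q₀` every point of
`Q₀` is at distance at least `max 1 ((1 + ‖y‖) / 4)` from `y`. If `‖x - y‖ ≤ 1/2`, the point `x`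
also stays at distance `1/2` from `Q₀` and the inversion identity, integrated over `Q₀`, gives the
bound; otherwise `1 + ‖y‖ ≤ 11 ‖x - y‖` and the boundedness of `v` suffices.
-/

def rot90 : E2 →ₗᵢ[ℝ] E2 where
  toFun z := WithLp.toLp 2 ![-(z 1), z 0]
  map_add' a b := by ext i; fin_cases i <;> simp [add_comm]
  map_smul' c a := by ext i; fin_cases i <;> simp
  norm_map' z := by
    simp only [LinearMap.coe_mk, AddHom.coe_mk, EuclideanSpace.norm_eq, Fin.sum_univ_two]
    simp [add_comm]

lemma K_eq_smul_rot90 (z : E2) : K z = (2 * π)⁻¹ • rot90 ((1 / ‖z‖) ^ 2 • z) := by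
  rw [map_smul, smul_smul, K]
  congr 1
  field_simp

lemma norm_K (z : E2) : ‖K z‖ = (2 * π * ‖z‖)⁻¹ := by
  rw [K_eq_smul_rot90, norm_smul, LinearIsometry.norm_map, norm_smul]
  rcases eq_or_ne z 0 with rfl | hz
  · simp
  · have : ‖z‖ ≠ 0 := norm_ne_zero_iff.mpr hz
    simp only [norm_inv, norm_mul, norm_pow, abs_norm, Real.norm_ofNat, norm_eq_abs,
      abs_of_pos pi_pos, one_div, inv_pow]
    field_simp

lemma norm_K_le_of_le {z : E2} {r : ℝ} (hr : 0 < r) (hz : r ≤ ‖z‖) : ‖K z‖ ≤ (2 * π * r)⁻¹ := by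
  rw [norm_K]; gcongr

lemma dist_K_K {a b : E2} (ha : a ≠ 0) (hb : b ≠ 0) :
    dist (K a) (K b) = dist a b / (2 * π * (‖a‖ * ‖b‖)) := by
  rw [K_eq_smul_rot90, K_eq_smul_rot90, dist_smul₀, LinearIsometry.dist_map,
    dist_div_norm_sq_smul ha hb]
  simp only [norm_inv, norm_mul, Real.norm_ofNat, norm_eq_abs, abs_of_pos pi_pos, one_pow]
  field_simp

lemma measurable_K : Measurable K := by
  unfold K; fun_prop

lemma integrableOn_K_ball (r : ℝ) : IntegrableOn K (Metric.ball 0 r) := by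
  have hradial : IntegrableOn (fun t : ℝ => t ^ (Module.finrank ℝ E2 - 1) • (2 * π * t)⁻¹)
      (Set.Ioo 0 r) := by
    refine (integrableOn_const (C := (2 * π)⁻¹) (by simp)).congr_fun (fun t ht => ?_)
      measurableSet_Ioo
    have : t ≠ 0 := ht.1.ne'
    simp only [finrank_euclideanSpace, Fintype.card_fin, Nat.add_one_sub_one, pow_one, smul_eq_mul]
    field_simp
  refine ((integrableOn_fun_norm_addHaar volume).2 hradial).mono'
    measurable_K.aestronglyMeasurable (ae_of_all _ fun z => ?_)
  simp [norm_K]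

lemma norm_le_of_abs_apply_le {x : E2} {c : ℝ} (h0 : |x 0| ≤ c) (h1 : |x 1| ≤ c) :
    ‖x‖ ≤ 2 * c := by
  have hc : 0 ≤ c := (abs_nonneg _).trans h0
  rw [EuclideanSpace.norm_eq, Fin.sum_univ_two, Real.sqrt_le_iff]
  simp only [Real.norm_eq_abs, sq_abs]
  constructor
  · positivity
  · nlinarith [sq_abs (x 0), sq_abs (x 1), abs_nonneg (x 0), abs_nonneg (x 1)]

lemma norm_le_of_mem_Q0 {w : E2} (hw : w ∈ Q0) : ‖w‖ ≤ 2 := by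
  obtain ⟨⟨h00, h01⟩, h10, h11⟩ := hw
  linarith [norm_le_of_abs_apply_le (c := 1) (abs_le.2 ⟨by linarith, h01.le⟩)
    (abs_le.2 ⟨by linarith, h11.le⟩)]

lemma norm_le_of_mem_threeQ0 {x : E2} (hx : x ∈ threeQ0) : ‖x‖ ≤ 4 := by
  obtain ⟨⟨h00, h01⟩, h10, h11⟩ := hx
  linarith [norm_le_of_abs_apply_le (c := 2) (abs_le.2 ⟨by linarith, h01⟩)
    (abs_le.2 ⟨by linarith, h11⟩)]

lemma one_le_norm_sub_of_notMem_threeQ0 {y w : E2} (hy : y ∉ threeQ0) (hw : w ∈ Q0) :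
    1 ≤ ‖y - w‖ := by
  obtain ⟨⟨h00, h01⟩, h10, h11⟩ := hw
  have key : ∃ i, 1 ≤ |y i - w i| := by
    by_contra! h
    obtain ⟨h0, h1⟩ := abs_lt.1 (h 0)
    obtain ⟨h2, h3⟩ := abs_lt.1 (h 1)
    exact hy ⟨⟨by linarith, by linarith⟩, by linarith, by linarith⟩
  obtain ⟨i, hi⟩ := key
  exact hi.trans (PiLp.norm_apply_le (y - w) i)

lemma volume_Q0_lt_top : volume Q0 < ⊤ :=
  (Metric.isBounded_closedBall (x := 0) (r := 2)).subset
    (fun _ hw => mem_closedBall_zero_iff.2 (norm_le_of_mem_Q0 hw)) |>.measure_lt_top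

lemma measurableSet_Q0 : MeasurableSet Q0 := by
  unfold Q0; measurability

lemma integrableOn_K_sub (x : E2) : IntegrableOn (fun w => K (x - w)) Q0 := by
  have h := (((integrableOn_K_ball (‖x‖ + 3)).integrable_indicator measurableSet_ball).comp_sub_left
    x).integrableOn (s := Q0)
  refine h.congr_fun (fun w hw => Set.indicator_of_mem ?_ _) measurableSet_Q0
  rw [mem_ball_zero_iff]
  linarith [norm_sub_le x w, norm_le_of_mem_Q0 hw]

lemma exists_norm_v_le : ∃ M, ∀ x, ‖v x‖ ≤ M := by
  set g : E2 → ℝ := (Metric.ball 0 1).indicator fun z => ‖K z‖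
  have hg : Integrable g :=
    IntegrableOn.integrable_indicator (integrableOn_K_ball 1).norm measurableSet_ball
  have hK : ∀ z, ‖K z‖ ≤ g z + (2 * π)⁻¹ := by
    intro z
    by_cases hz : z ∈ Metric.ball 0 1
    · simp [g, Set.indicator_of_mem hz, pi_pos.le]
    · rw [Metric.mem_ball, dist_zero_right, not_lt] at hz
      simpa [g, Set.indicator_of_notMem, hz] using norm_K_le_of_le one_pos hz
  refine ⟨(∫ z, g z) + (2 * π)⁻¹ * volume.real Q0, fun x => ?_⟩
  calc ‖v x‖ ≤ ∫ w in Q0, ‖K (x - w)‖ := norm_integral_le_integral_norm _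
    _ ≤ ∫ w in Q0, (g (x - w) + (2 * π)⁻¹) :=
        setIntegral_mono (integrableOn_K_sub x).norm
          ((hg.comp_sub_left x).integrableOn.add (integrableOn_const volume_Q0_lt_top.ne))
          fun w => hK _
    _ = (∫ w in Q0, g (x - w)) + (2 * π)⁻¹ * volume.real Q0 := by
        rw [integral_add (hg.comp_sub_left x).integrableOn
          (integrableOn_const volume_Q0_lt_top.ne), setIntegral_const, smul_eq_mul, mul_comm]
    _ ≤ (∫ w, g (x - w)) + (2 * π)⁻¹ * volume.real Q0 := by
        gcongr
        exacts [ae_of_all _ fun w => Set.indicator_nonneg (fun _ _ => norm_nonneg _) _,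
          hg.comp_sub_left x, Measure.restrict_le_self]
    _ = (∫ z, g z) + (2 * π)⁻¹ * volume.real Q0 := by rw [integral_sub_left_eq_self]

lemma norm_v_sub_v_le {x y : E2} {a b : ℝ} (ha : 0 < a) (hb : 0 < b)
    (hx : ∀ w ∈ Q0, a ≤ ‖x - w‖) (hy : ∀ w ∈ Q0, b ≤ ‖y - w‖) :
    ‖v x - v y‖ ≤ ‖x - y‖ / (2 * π * (a * b)) * volume.real Q0 := by
  rw [v, v, ← integral_sub (integrableOn_K_sub x) (integrableOn_K_sub y)]
  refine norm_setIntegral_le_of_norm_le_const volume_Q0_lt_top fun w hw => ?_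
  have hxw := hx w hw
  have hyw := hy w hw
  rw [← dist_eq_norm,
    dist_K_K (norm_pos_iff.1 (ha.trans_le hxw)) (norm_pos_iff.1 (hb.trans_le hyw)),
    dist_eq_norm, sub_sub_sub_cancel_right]
  gcongr

lemma exists_norm_v_sub_le_of_mem_threeQ0 :
    ∃ C > 0, ∀ x ∈ threeQ0, ∀ y ∉ threeQ0, ‖v x - v y‖ ≤ C * ‖x - y‖ / (1 + ‖y‖) := by
  obtain ⟨M, hM⟩ := exists_norm_v_le
  have hM0 : 0 ≤ M := (norm_nonneg _).trans (hM 0)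
  set A := 4 / π * volume.real Q0 with hA_def
  have hA : 0 ≤ A := by positivity
  refine ⟨A + 22 * M + 1, by positivity, fun x hx y hy => ?_⟩
  have hy1 : 0 < 1 + ‖y‖ := by positivity
  rw [mul_div_assoc]
  rcases le_or_gt ‖x - y‖ (1 / 2) with hnear | hfar
  · have hyw : ∀ w ∈ Q0, (1 + ‖y‖) / 4 ≤ ‖y - w‖ := fun w hw => by
      linarith [one_le_norm_sub_of_notMem_threeQ0 hy hw, norm_le_of_mem_Q0 hw, norm_sub_norm_le y w]
    have hxw : ∀ w ∈ Q0, 1 / 2 ≤ ‖x - w‖ := fun w hw => by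
      linarith [one_le_norm_sub_of_notMem_threeQ0 hy hw, norm_sub_le_norm_sub_add_norm_sub y x w,
        norm_sub_rev x y]
    calc ‖v x - v y‖ ≤ ‖x - y‖ / (2 * π * (1 / 2 * ((1 + ‖y‖) / 4))) * volume.real Q0 :=
          norm_v_sub_v_le (by norm_num) (by positivity) hxw hyw
      _ = A * (‖x - y‖ / (1 + ‖y‖)) := by rw [hA_def]; field_simp
      _ ≤ (A + 22 * M + 1) * (‖x - y‖ / (1 + ‖y‖)) := by gcongr; linarith
  · have hy11 : 1 / 11 ≤ ‖x - y‖ / (1 + ‖y‖) := by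
      rw [div_le_div_iff₀ (by norm_num) hy1]
      linarith [norm_le_of_mem_threeQ0 hx, norm_sub_norm_le y x, norm_sub_rev x y]
    calc ‖v x - v y‖ ≤ 2 * M := by linarith [norm_sub_le (v x) (v y), hM x, hM y]
      _ ≤ 22 * M * (‖x - y‖ / (1 + ‖y‖)) := by nlinarith
      _ ≤ (A + 22 * M + 1) * (‖x - y‖ / (1 + ‖y‖)) := by gcongr; linarith

theorem vortex_patch_lipschitz_mixed :
    ∃ C C' : ℝ, 0 < C ∧ 0 < C' ∧ ∀ x y : E2, x ∈ threeQ0 → y ∉ threeQ0 →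
      ‖v x - v y‖ ≤ C * ‖x - y‖ / (1 + ‖y‖) ∧
      ‖v x - v y‖ ≤ C' * ‖x - y‖ / ((1 + ‖x‖) * (1 + ‖y‖)) := by
  obtain ⟨C, hC, hmixed⟩ := exists_norm_v_sub_le_of_mem_threeQ0
  refine ⟨C, 5 * C, hC, by positivity, fun x y hx hy => ⟨hmixed x hx y hy, ?_⟩⟩
  have hx1 : 0 < 1 + ‖x‖ := by positivity
  calc ‖v x - v y‖ ≤ C * ‖x - y‖ / (1 + ‖y‖) := hmixed x hx y hy
    _ ≤ 5 / (1 + ‖x‖) * (C * ‖x - y‖ / (1 + ‖y‖)) :=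
        le_mul_of_one_le_left (by positivity)
          ((one_le_div hx1).2 (by linarith [norm_le_of_mem_threeQ0 hx]))
    _ = 5 * C * ‖x - y‖ / ((1 + ‖x‖) * (1 + ‖y‖)) := by field_simp
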